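/- Let G be a finite simple graph, let S₁, …, S_k ⊆ V be anchor groups, let v* ∈ V, let val* be the reduction value function, and let γ be a positive integer. Then there exists a connected subgraph H of G with v* ∈ V(H), V(H) ∩ S_i ≠ ∅ for every i ∈ {1, …, k}, and |V(H)| + |E(H)| ≤ γ, if and only if there exists a feasible subgraph H' of G (connected, containing v*, and meeting every S_i) with Φ(H') ≥ 1/γ, where Φ is computed with respect to val*. -/

import Mathlib

open scoped BigOperators

noncomputable def Phi {V : Type*} {G : SimpleGraph V} (H : G.Subgraph)
    (valV : V → ℝ) (valE : Sym2 V → ℝ) : ℝ :=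
  ((∑ᶠ v ∈ H.verts, valV v) + ∑ᶠ e ∈ H.edgeSet, valE e) /
    ((H.verts.ncard + H.edgeSet.ncard : ℕ) : ℝ)

noncomputable def redVal {V : Type*} [DecidableEq V] (vstar : V) : V → ℝ :=
  fun v => if v = vstar then 1 else 0

theorem finsum_mem_redVal {V : Type*} [DecidableEq V] {vstar : V} {s : Set V}
    (h : vstar ∈ s) : ∑ᶠ v ∈ s, redVal vstar v = 1 := by
  rw [finsum_mem_def, finsum_eq_single _ vstar fun v hv => by simp [redVal, hv]]
  simp [redVal, h]

theorem Phi_redVal {V : Type*} [DecidableEq V] {G : SimpleGraph V} {H : G.Subgraph}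
    {vstar : V} (h : vstar ∈ H.verts) :
    Phi H (redVal vstar) (fun _ => 0) = 1 / ((H.verts.ncard + H.edgeSet.ncard : ℕ) : ℝ) := by
  simp [Phi, finsum_mem_redVal h]

theorem one_div_le_Phi_redVal_iff {V : Type*} [Finite V] [DecidableEq V] {G : SimpleGraph V}
    {H : G.Subgraph} {vstar : V} (h : vstar ∈ H.verts) {γ : ℕ} (hγ : 0 < γ) :
    1 / (γ : ℝ) ≤ Phi H (redVal vstar) (fun _ => 0) ↔
      H.verts.ncard + H.edgeSet.ncard ≤ γ := by
  have hsize : 0 < H.verts.ncard + H.edgeSet.ncard :=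
    Nat.add_pos_left ((Set.ncard_pos H.verts.toFinite).mpr ⟨vstar, h⟩) _
  rw [Phi_redVal h, one_div_le_one_div (by exact_mod_cast hγ) (by exact_mod_cast hsize)]
  exact Nat.cast_le

theorem stmt_4 {V : Type*} [Fintype V] [DecidableEq V] (G : SimpleGraph V)
    (k : ℕ) (S : Fin k → Set V) (vstar : V) (γ : ℕ) (hγ : 0 < γ) :
    (∃ H : G.Subgraph, H.Connected ∧ vstar ∈ H.verts ∧
        (∀ i : Fin k, (H.verts ∩ S i).Nonempty) ∧
        H.verts.ncard + H.edgeSet.ncard ≤ γ) ↔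
      (∃ H' : G.Subgraph, H'.Connected ∧ vstar ∈ H'.verts ∧
        (∀ i : Fin k, (H'.verts ∩ S i).Nonempty) ∧
        Phi H' (redVal vstar) (fun _ => 0) ≥ 1 / (γ : ℝ)) :=
  exists_congr fun _ => and_congr_right fun _ => and_congr_right fun hv =>
    and_congr_right fun _ => (one_div_le_Phi_redVal_iff hv hγ).symm
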